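/- arXiv:1502.06315 — 3 statements merged into one kernel-verified Lean document; each statement's English description precedes it below -/
import Mathlib

section
/- Let φ: ℝⁿ × ℝᵖ → ℝ be a continuous convex function and (x̄, ȳ) ∈ ℝⁿ × ℝᵖ. If the partial function x ↦ φ(x, ȳ) is Fréchet differentiable at x̄ and y ↦ φ(x̄, y) is Fréchet differentiable at ȳ, then φ is Fréchet differentiable at (x̄, ȳ). -/
/-!
Subtracting the candidate derivative leaves g(z) = φ(a + z) - φ(a) - A z₁ - B z₂, which is convex,
vanishes at 0 and is o(‖z‖) along both axes. As z is the midpoint of (2z₁, 0) and (0, 2z₂),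
convexity bounds g(z) from above by an o(‖z‖) quantity; as 0 is the midpoint of z and -z, it gives
-g(z) ≤ g(-z), so the same bound controls g from below.
-/

open Asymptotics Filter Set Topology

section

variable {E F G : Type*} [NormedAddCommGroup E] [NormedSpace ℝ E]
  [NormedAddCommGroup F] [NormedSpace ℝ F] [NormedAddCommGroup G]

theorem Asymptotics.IsLittleO.comp_continuousLinearMap {ρ : E → G}
    (h : ρ =o[𝓝 0] fun x => x) (L : F →L[ℝ] E) : (fun z => ρ (L z)) =o[𝓝 0] fun z => z :=
  (h.comp_tendsto (L.continuous.tendsto' 0 0 (map_zero L))).trans_isBigO (L.isBigO_id _)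

theorem ConvexOn.neg_le_apply_neg {g : E → ℝ} (hg : ConvexOn ℝ univ g) (hg0 : g 0 = 0)
    (z : E) : -g z ≤ g (-z) := by
  have := hg.2 (mem_univ z) (mem_univ (-z)) (by norm_num : (0 : ℝ) ≤ 2⁻¹)
    (by norm_num : (0 : ℝ) ≤ 2⁻¹) (by norm_num)
  rw [smul_neg, add_neg_cancel, hg0, smul_eq_mul, smul_eq_mul] at this
  linarith

theorem ConvexOn.isLittleO_of_le {g u : E → ℝ} (hg : ConvexOn ℝ univ g) (hg0 : g 0 = 0)
    (hle : ∀ z, g z ≤ u z) (hu : u =o[𝓝 0] fun z => z) : g =o[𝓝 0] fun z => z := by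
  have hu_neg : (fun z => u (-z)) =o[𝓝 0] fun z => z :=
    (hu.comp_tendsto (continuous_neg.tendsto' 0 0 neg_zero)).of_neg_right
  refine IsBigO.trans_isLittleO (isBigO_of_le _ fun z => ?_) (hu.norm_left.add hu_neg.norm_left)
  have hlow := (hg.neg_le_apply_neg hg0 z).trans (hle (-z))
  refine le_trans ?_ (Real.le_norm_self _)
  simp only [Real.norm_eq_abs]
  exact abs_le.2 ⟨by linarith [le_abs_self (u (-z)), abs_nonneg (u z)],
    by linarith [hle z, le_abs_self (u z), abs_nonneg (u (-z))]⟩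

theorem ConvexOn.isLittleO_of_isLittleO_inl_inr {g : E × F → ℝ} (hg : ConvexOn ℝ univ g)
    (hg0 : g 0 = 0) (h₁ : (fun x => g (x, 0)) =o[𝓝 0] fun x => x)
    (h₂ : (fun y => g (0, y)) =o[𝓝 0] fun y => y) : g =o[𝓝 0] fun z => z := by
  refine hg.isLittleO_of_le hg0
    (u := fun z => 2⁻¹ * (g ((2 : ℝ) • z.1, 0) + g (0, (2 : ℝ) • z.2)))
    (fun z => ?_) ?_
  · have hz : (2⁻¹ : ℝ) • ((2 : ℝ) • z.1, (0 : F)) + (2⁻¹ : ℝ) • ((0 : E), (2 : ℝ) • z.2) = z := by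
      ext <;> simp [smul_smul]
    have := hg.2 (mem_univ ((2 : ℝ) • z.1, (0 : F))) (mem_univ ((0 : E), (2 : ℝ) • z.2))
      (by norm_num : (0 : ℝ) ≤ 2⁻¹) (by norm_num : (0 : ℝ) ≤ 2⁻¹) (by norm_num)
    rwa [hz, smul_eq_mul, smul_eq_mul, ← mul_add] at this
  · exact ((h₁.comp_continuousLinearMap ((2 : ℝ) • ContinuousLinearMap.fst ℝ E F)).add
      (h₂.comp_continuousLinearMap ((2 : ℝ) • ContinuousLinearMap.snd ℝ E F))).const_mul_left _

theorem ConvexOn.hasFDerivAt_coprod_of_partial {φ : E × F → ℝ} (hφ : ConvexOn ℝ univ φ)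
    {a : E × F} {A : E →L[ℝ] ℝ} {B : F →L[ℝ] ℝ}
    (hA : HasFDerivAt (fun x => φ (x, a.2)) A a.1) (hB : HasFDerivAt (fun y => φ (a.1, y)) B a.2) :
    HasFDerivAt φ (A.coprod B) a := by
  rw [hasFDerivAt_iff_isLittleO_nhds_zero] at hA hB ⊢
  have hg : ConvexOn ℝ univ fun z => φ (a + z) - φ a - A.coprod B z := by
    have := ((hφ.translate_right a).sub ((A.coprod B).toLinearMap.concaveOn convex_univ)).add_const
      (-φ a)
    rw [preimage_univ] at this
    refine this.congr fun z _ => ?_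
    simp only [Function.comp_apply, Pi.add_apply, Pi.sub_apply, ContinuousLinearMap.coe_coe]
    ring
  refine hg.isLittleO_of_isLittleO_inl_inr (by simp) ?_ ?_
  · exact hA.congr_left fun x => by simp [Prod.add_def]
  · exact hB.congr_left fun y => by simp [Prod.add_def]

end

theorem frechet_of_partial_frechet_convex_general
    (n p : ℕ) (φ : EuclideanSpace ℝ (Fin n) × EuclideanSpace ℝ (Fin p) → ℝ)
    (hconv : ConvexOn ℝ Set.univ φ)
    (xb : EuclideanSpace ℝ (Fin n)) (yb : EuclideanSpace ℝ (Fin p))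
    (hx : DifferentiableAt ℝ (fun x => φ (x, yb)) xb)
    (hy : DifferentiableAt ℝ (fun y => φ (xb, y)) yb) :
    DifferentiableAt ℝ φ (xb, yb) :=
  (hconv.hasFDerivAt_coprod_of_partial hx.hasFDerivAt hy.hasFDerivAt).differentiableAt

theorem frechet_of_partial_frechet_convex
    (n p : ℕ) (φ : EuclideanSpace ℝ (Fin n) × EuclideanSpace ℝ (Fin p) → ℝ)
    (hconv : ConvexOn ℝ Set.univ φ) (hcont : Continuous φ)
    (xb : EuclideanSpace ℝ (Fin n)) (yb : EuclideanSpace ℝ (Fin p))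
    (hx : DifferentiableAt ℝ (fun x => φ (x, yb)) xb)
    (hy : DifferentiableAt ℝ (fun y => φ (xb, y)) yb) :
    DifferentiableAt ℝ φ (xb, yb) :=
  frechet_of_partial_frechet_convex_general n p φ hconv xb yb hx hy
end

section
/- Let φ: ℝⁿ × ℝᵖ → ℝ be a continuous convex function and (x̄, ȳ) ∈ ℝⁿ × ℝᵖ. Then for any subgradient ᾱ of the partial function x ↦ φ(x, ȳ) at x̄, there exists β̄ ∈ ℝᵖ such that (ᾱ, β̄) is a subgradient of φ at (x̄, ȳ). -/
/-!
Subtracting `⟪ᾱ, x - x̄⟫` reduces to the case where `x̄` minimises `φ(·, ȳ)`. Then the projection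
`{(y, t) | ∃ x, φ(x, y) < t}` of the strict epigraph is an open convex set missing `(ȳ, φ(x̄, ȳ))`,
and a Hahn–Banach functional separating them, normalised to coefficient `-1` on `t`, is the
required `β̄`.
-/

open RealInnerProductSpace Set

theorem isOpen_exists_lt_fiber {E F : Type*} [TopologicalSpace F] {φ : E × F → ℝ}
    (hcont : ∀ x, Continuous fun y => φ (x, y)) :
    IsOpen {z : F × ℝ | ∃ x, φ (x, z.1) < z.2} := by
  rw [ofPred_exists]
  exact isOpen_iUnion fun x => isOpen_lt ((hcont x).comp continuous_fst) continuous_snd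

section

variable {E F : Type*} [AddCommGroup E] [Module ℝ E] [AddCommGroup F] [Module ℝ F]

theorem ConvexOn.convex_exists_lt_fiber {φ : E × F → ℝ} (hφ : ConvexOn ℝ univ φ) :
    Convex ℝ {z : F × ℝ | ∃ x, φ (x, z.1) < z.2} := by
  let L : (E × F) × ℝ →ₗ[ℝ] F × ℝ :=
    (LinearMap.snd ℝ E F ∘ₗ LinearMap.fst ℝ (E × F) ℝ).prod (LinearMap.snd ℝ (E × F) ℝ)
  have hL : {z : F × ℝ | ∃ x, φ (x, z.1) < z.2} = L '' {p | p.1 ∈ univ ∧ φ p.1 < p.2} := by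
    ext ⟨y, t⟩
    simp [L]
  rw [hL]
  exact hφ.convex_strict_epigraph.linear_image L

variable [TopologicalSpace F] [IsTopologicalAddGroup F] [ContinuousSMul ℝ F]

theorem ConvexOn.exists_strongDual_le_of_isMinOn_fiber {φ : E × F → ℝ}
    (hφ : ConvexOn ℝ univ φ) (hcont : ∀ x, Continuous fun y => φ (x, y)) {x₀ : E} {y₀ : F}
    (hmin : IsMinOn (fun x => φ (x, y₀)) univ x₀) :
    ∃ g : StrongDual ℝ F, ∀ x y, φ (x₀, y₀) + g (y - y₀) ≤ φ (x, y) := by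
  set m := φ (x₀, y₀)
  obtain ⟨f, hf⟩ := geometric_hahn_banach_open_point hφ.convex_exists_lt_fiber
    (isOpen_exists_lt_fiber hcont) (x := (y₀, m)) fun ⟨x, hx⟩ => (isMinOn_univ_iff.1 hmin x).not_gt hx
  set ℓ := f.comp (ContinuousLinearMap.inl ℝ F ℝ)
  set s := f (0, 1)
  have hf_apply (y : F) (t : ℝ) : f (y, t) = ℓ y + t * s := by
    rw [show ((y, t) : F × ℝ) = (y, 0) + t • (0, 1) by simp, map_add, map_smul, smul_eq_mul]
    rfl
  have hsep (x : E) (y : F) (t : ℝ) (ht : φ (x, y) < t) : ℓ y + t * s < ℓ y₀ + m * s := by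
    simpa only [hf_apply] using hf (y, t) ⟨x, ht⟩
  have hs : s < 0 := by linarith [hsep x₀ y₀ (m + 1) (lt_add_one m)]
  refine ⟨(-s)⁻¹ • ℓ, fun x y => ?_⟩
  have hℓ : (-s)⁻¹ * ℓ (y - y₀) ≤ φ (x, y) - m := le_of_forall_gt_imp_ge_of_dense fun t ht => by
    rw [inv_mul_le_iff₀ (neg_pos.2 hs), map_sub]
    linarith [hsep x y (t + m) (by linarith)]
  rw [smul_apply, smul_eq_mul]
  linarith [hℓ]

theorem ConvexOn.exists_strongDual_of_partial_subgradient {φ : E × F → ℝ}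
    (hφ : ConvexOn ℝ univ φ) (hcont : ∀ x, Continuous fun y => φ (x, y)) {x₀ : E} {y₀ : F}
    {a : E →ₗ[ℝ] ℝ} (hsub : ∀ x, φ (x₀, y₀) + a (x - x₀) ≤ φ (x, y₀)) :
    ∃ g : StrongDual ℝ F, ∀ x y, φ (x₀, y₀) + a (x - x₀) + g (y - y₀) ≤ φ (x, y) := by
  have hψ : ConvexOn ℝ univ fun z : E × F => φ z - a z.1 :=
    hφ.add ((-(a ∘ₗ LinearMap.fst ℝ E F)).convexOn convex_univ)
  obtain ⟨g, hg⟩ := hψ.exists_strongDual_le_of_isMinOn_fiber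
    (fun x => (hcont x).sub (continuous_const : Continuous fun _ : F => a x))
    (isMinOn_univ_iff.2 fun x => by linarith [hsub x, a.map_sub x x₀])
  refine ⟨g, fun x y => ?_⟩
  linarith [hg x y, a.map_sub x x₀]

end

theorem partial_subgradient_extends
    (n p : ℕ) (φ : EuclideanSpace ℝ (Fin n) × EuclideanSpace ℝ (Fin p) → ℝ)
    (hconv : ConvexOn ℝ Set.univ φ) (hcont : Continuous φ)
    (xb : EuclideanSpace ℝ (Fin n)) (yb : EuclideanSpace ℝ (Fin p))
    (alphaBar : EuclideanSpace ℝ (Fin n))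
    (hsub : ∀ x, φ (xb, yb) + ⟪alphaBar, x - xb⟫ ≤ φ (x, yb)) :
    ∃ betaBar : EuclideanSpace ℝ (Fin p),
      ∀ x y, φ (xb, yb) + ⟪alphaBar, x - xb⟫ + ⟪betaBar, y - yb⟫ ≤ φ (x, y) := by
  obtain ⟨g, hg⟩ := hconv.exists_strongDual_of_partial_subgradient
    (fun x => hcont.comp (Continuous.prodMk_right x)) (a := (innerSL ℝ alphaBar).toLinearMap) hsub
  refine ⟨(InnerProductSpace.toDual ℝ _).symm g, fun x y => ?_⟩
  simpa only [InnerProductSpace.toDual_symm_apply, ContinuousLinearMap.coe_coe,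
    innerSL_apply_apply] using hg x y
end

section
/- Let X ⊆ ℝⁿ be a convex set, x_l ∈ X, and let g₁,…,g_m: ℝⁿ → ℝ be convex. Partition {1,…,m} as J ∪ J¹ ∪ J² ∪ J³ with g_i(x_l) ≤ 0 for i ∈ J, g_i(x_l) = 0 for i ∈ J¹, g_i(x_l) > 0 for i ∈ J², g_i(x_l) < 0 for i ∈ J³. Suppose there are multipliers λ_i ≥ 0 for i ∈ J with λ_i g_i(x_l) = 0, λ_i ∈ [0,1] for i ∈ J¹, λ_i = 1 for i ∈ J², λ_i = 0 for i ∈ J³, and subgradients ξ_i ∈ ∂g_i(x_l) such that −Σᵢ λ_i ξ_i ∈ N(X, x_l). If Σ_{i ∈ J¹∪J²∪J³} max{g_i(x_l), 0} > 0, then there is no x ∈ X satisfying g_i(x_l) + ⟨ξ_i, x − x_l⟩ ≤ 0 for all i = 1,…,m. -/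
/-!
Multiply the `i`-th linearized constraint `g i xl + ⟪ξ i, x - xl⟫ ≤ 0` by `lam i ≥ 0` and add.
The normal-cone condition makes `⟪∑ i, lam i • ξ i, x - xl⟫` nonnegative, and complementarity
turns `∑ i, lam i * g i xl` into the total violation `∑ i ∈ J1 ∪ J2 ∪ J3, max (g i xl) 0 > 0`,
so the weighted sum of the constraints would be positive.
-/

open RealInnerProductSpace

open Finset

theorem not_forall_add_inner_nonpos {E ι : Type*} [NormedAddCommGroup E] [InnerProductSpace ℝ E]
    (s : Finset ι) (lam c : ι → ℝ) (ξ : ι → E) (v : E) (hlam : ∀ i ∈ s, 0 ≤ lam i)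
    (hv : 0 ≤ ⟪∑ i ∈ s, lam i • ξ i, v⟫) (hc : 0 < ∑ i ∈ s, lam i * c i) :
    ¬ ∀ i ∈ s, c i + ⟪ξ i, v⟫ ≤ 0 := by
  intro hlin
  have hweighted : ∑ i ∈ s, lam i * (c i + ⟪ξ i, v⟫) ≤ 0 :=
    sum_nonpos fun i hi => mul_nonpos_of_nonneg_of_nonpos (hlam i hi) (hlin i hi)
  have hsplit : ∑ i ∈ s, lam i * (c i + ⟪ξ i, v⟫)
      = ∑ i ∈ s, lam i * c i + ⟪∑ i ∈ s, lam i • ξ i, v⟫ := by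
    simp only [sum_inner, real_inner_smul_left, mul_add, sum_add_distrib]
  linarith

theorem mul_eq_max_zero_of_mem_union {ι : Type*} [DecidableEq ι] {J1 J2 J3 : Finset ι}
    {lam c : ι → ℝ} (hc1 : ∀ i ∈ J1, c i = 0) (hc2 : ∀ i ∈ J2, 0 ≤ c i)
    (hc3 : ∀ i ∈ J3, c i ≤ 0) (hlam2 : ∀ i ∈ J2, lam i = 1) (hlam3 : ∀ i ∈ J3, lam i = 0)
    {i : ι} (hi : i ∈ J1 ∪ J2 ∪ J3) : lam i * c i = max (c i) 0 := by
  rcases mem_union.1 hi with hi | hi3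
  · rcases mem_union.1 hi with hi1 | hi2
    · simp [hc1 i hi1]
    · rw [hlam2 i hi2, one_mul, max_eq_left (hc2 i hi2)]
  · rw [hlam3 i hi3, zero_mul, max_eq_right (hc3 i hi3)]

theorem sum_max_zero_eq_sum_mul {ι : Type*} [Fintype ι] [DecidableEq ι]
    {J J1 J2 J3 : Finset ι} {lam c : ι → ℝ} (hcover : ∀ i, i ∉ J1 ∪ J2 ∪ J3 → i ∈ J)
    (hJ : ∀ i ∈ J, lam i * c i = 0) (hc1 : ∀ i ∈ J1, c i = 0) (hc2 : ∀ i ∈ J2, 0 ≤ c i)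
    (hc3 : ∀ i ∈ J3, c i ≤ 0) (hlam2 : ∀ i ∈ J2, lam i = 1) (hlam3 : ∀ i ∈ J3, lam i = 0) :
    ∑ i ∈ J1 ∪ J2 ∪ J3, max (c i) 0 = ∑ i, lam i * c i := by
  rw [← sum_subset (subset_univ (J1 ∪ J2 ∪ J3)) fun i _ hi => hJ i (hcover i hi)]
  exact sum_congr rfl fun i hi =>
    (mul_eq_max_zero_of_mem_union hc1 hc2 hc3 hlam2 hlam3 hi).symm

theorem infeasibility_cut_general
    (n m : ℕ) (X : Set (EuclideanSpace ℝ (Fin n)))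
    (xl : EuclideanSpace ℝ (Fin n))
    (g : Fin m → EuclideanSpace ℝ (Fin n) → ℝ)
    (J J1 J2 J3 : Finset (Fin m))
    (hpart : ∀ i : Fin m, (i ∈ J ∧ i ∉ J1 ∧ i ∉ J2 ∧ i ∉ J3) ∨
      (i ∉ J ∧ i ∈ J1 ∧ i ∉ J2 ∧ i ∉ J3) ∨
      (i ∉ J ∧ i ∉ J1 ∧ i ∈ J2 ∧ i ∉ J3) ∨
      (i ∉ J ∧ i ∉ J1 ∧ i ∉ J2 ∧ i ∈ J3))
    (hJ1 : ∀ i ∈ J1, g i xl = 0)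
    (hJ2 : ∀ i ∈ J2, 0 < g i xl)
    (hJ3 : ∀ i ∈ J3, g i xl < 0)
    (lam : Fin m → ℝ)
    (hlamJ : ∀ i ∈ J, 0 ≤ lam i ∧ lam i * g i xl = 0)
    (hlamJ1 : ∀ i ∈ J1, lam i ∈ Set.Icc (0 : ℝ) 1)
    (hlamJ2 : ∀ i ∈ J2, lam i = 1)
    (hlamJ3 : ∀ i ∈ J3, lam i = 0)
    (ξ : Fin m → EuclideanSpace ℝ (Fin n))
    (hkkt : ∀ z ∈ X, ⟪-(∑ i, lam i • ξ i), z - xl⟫ ≤ 0)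
    (hpos : 0 < ∑ i ∈ J1 ∪ J2 ∪ J3, max (g i xl) 0) :
    ¬ ∃ x ∈ X, ∀ i, g i xl + ⟪ξ i, x - xl⟫ ≤ 0 := by
  rintro ⟨x, hx, hlin⟩
  have hcover : ∀ i, i ∉ J1 ∪ J2 ∪ J3 → i ∈ J := by
    intro i hi
    rcases hpart i with h | h | h | h <;> simp_all
  have hlam : ∀ i ∈ univ, 0 ≤ lam i := by
    intro i _
    rcases hpart i with ⟨h, -⟩ | ⟨-, h, -⟩ | ⟨-, -, h, -⟩ | ⟨-, -, -, h⟩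
    · exact (hlamJ i h).1
    · exact (hlamJ1 i h).1
    · exact (hlamJ2 i h).symm ▸ zero_le_one
    · exact (hlamJ3 i h).ge
  have hsum := sum_max_zero_eq_sum_mul hcover (fun i hi => (hlamJ i hi).2) hJ1
    (fun i hi => (hJ2 i hi).le) (fun i hi => (hJ3 i hi).le) hlamJ2 hlamJ3
  refine not_forall_add_inner_nonpos univ lam (fun i => g i xl) ξ (x - xl) hlam ?_
    (hsum ▸ hpos) fun i _ => hlin i
  simpa only [inner_neg_left, neg_nonpos] using hkkt x hx

theorem infeasibility_cut
    (n m : ℕ) (X : Set (EuclideanSpace ℝ (Fin n))) (hXconv : Convex ℝ X)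
    (xl : EuclideanSpace ℝ (Fin n)) (hxl : xl ∈ X)
    (g : Fin m → EuclideanSpace ℝ (Fin n) → ℝ)
    (hg : ∀ i, ConvexOn ℝ Set.univ (g i))
    (J J1 J2 J3 : Finset (Fin m))
    (hpart : ∀ i : Fin m, (i ∈ J ∧ i ∉ J1 ∧ i ∉ J2 ∧ i ∉ J3) ∨
      (i ∉ J ∧ i ∈ J1 ∧ i ∉ J2 ∧ i ∉ J3) ∨
      (i ∉ J ∧ i ∉ J1 ∧ i ∈ J2 ∧ i ∉ J3) ∨
      (i ∉ J ∧ i ∉ J1 ∧ i ∉ J2 ∧ i ∈ J3))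
    (hJ : ∀ i ∈ J, g i xl ≤ 0)
    (hJ1 : ∀ i ∈ J1, g i xl = 0)
    (hJ2 : ∀ i ∈ J2, 0 < g i xl)
    (hJ3 : ∀ i ∈ J3, g i xl < 0)
    (lam : Fin m → ℝ)
    (hlamJ : ∀ i ∈ J, 0 ≤ lam i ∧ lam i * g i xl = 0)
    (hlamJ1 : ∀ i ∈ J1, lam i ∈ Set.Icc (0 : ℝ) 1)
    (hlamJ2 : ∀ i ∈ J2, lam i = 1)
    (hlamJ3 : ∀ i ∈ J3, lam i = 0)
    (ξ : Fin m → EuclideanSpace ℝ (Fin n))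
    (hξ : ∀ i, ∀ x, g i xl + ⟪ξ i, x - xl⟫ ≤ g i x)
    (hkkt : ∀ z ∈ X, ⟪-(∑ i, lam i • ξ i), z - xl⟫ ≤ 0)
    (hpos : 0 < ∑ i ∈ J1 ∪ J2 ∪ J3, max (g i xl) 0) :
    ¬ ∃ x ∈ X, ∀ i, g i xl + ⟪ξ i, x - xl⟫ ≤ 0 :=
  infeasibility_cut_general n m X xl g J J1 J2 J3 hpart hJ1 hJ2 hJ3 lam hlamJ hlamJ1 hlamJ2 hlamJ3 ξ
    hkkt hpos
end
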